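/- Let X and Y be forests over an alphabet 𝒳 and c a cost function over 𝒳 that is non-negative, self-equal, and conforms to the triangular inequality. Then the minimum cost of an edit script transforming X into Y equals the minimum cost of a tree mapping between X and Y: min { c(δ̄, X) : δ̄ an edit script with δ̄(X) = Y } = min { c(M, X, Y) : M a tree mapping between X and Y }. -/

import Mathlib

/-!
Scripts and tree mappings are converted into each other without increasing the cost.

A tree mapping of the result of an edit is pulled back through the edit: through a deletion by
shifting pre-order indices, through a replacement unchanged, and through an insertion by
unmatching the inserted node and shifting. By the triangle inequality the mapping cost grows by
at most the cost of the edit, and the empty script comes with the identity mapping, of cost zero.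

Conversely, a tree mapping is realised by deleting an unmatched node of `X`, or by reaching `Y`
with an unmatched node removed and inserting that node last. Once every node is matched, the
mapping preserves pre-order and ancestry, so it is the identity on indices, the two forests
have the same shape, and replacements finish the script at the cost of the mapping.

A forest is described by the label and subtree size of each node in pre-order (`profileAt`);
this profile determines the forest and changes locally under each edit.
-/

namespace TED

/-- A tree over an alphabet `α`: a label together with a (possibly empty) list of children. -/
inductive PTree (α : Type) where
  | node : α → List (PTree α) → PTree α

/-- A forest over `α` is a finite list of trees; `[]` is the empty forest `ε`. -/
abbrev Forest (α : Type) := List (PTree α)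

namespace PTree

/-- The label of (the root of) a tree. -/
def label {α : Type} : PTree α → α
  | node a _ => a

/-- The children of (the root of) a tree. -/
def children {α : Type} : PTree α → List (PTree α)
  | node _ cs => cs

mutual
  /-- The number of nodes of a tree. -/
  def size {α : Type} : PTree α → ℕ
    | node _ cs => 1 + sizeL cs
  /-- The number of nodes of a forest. -/
  def sizeL {α : Type} : List (PTree α) → ℕ
    | [] => 0
    | t :: ts => size t + sizeL ts
end

mutual
  /-- The pre-order list of all subtrees of a tree. -/
  def subtreesT {α : Type} : PTree α → List (PTree α)
    | node a cs => node a cs :: subtreesL cs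
  /-- The pre-order list of all subtrees of a forest. -/
  def subtreesL {α : Type} : List (PTree α) → List (PTree α)
    | [] => []
    | t :: ts => subtreesT t ++ subtreesL ts
end

end PTree

open PTree

/-- The pre-order `π(X)` of a forest: the list of all its subtrees. -/
def preorder {α : Type} (F : Forest α) : List (PTree α) := PTree.subtreesL F

/-- The size `|X|` of a forest: the length of its pre-order. -/
def fsize {α : Type} (F : Forest α) : ℕ := (preorder F).length

/-- The `i`-th subtree `x̄_i` (1-indexed pre-order) of a forest, if it exists. -/
def treeAt {α : Type} (F : Forest α) (i : ℕ) : Option (PTree α) := (preorder F)[i - 1]?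

/-- The label `x_i` of the `i`-th subtree, as an element of `𝒳 ∪ {−}`
(`none` plays the role of the gap symbol `−`). -/
def labelAt {α : Type} (F : Forest α) (i : ℕ) : Option α := (treeAt F i).map PTree.label

/-- The number of nodes of the `i`-th subtree `x̄_i`. -/
def sizeAt {α : Type} (F : Forest α) (i : ℕ) : ℕ := ((treeAt F i).map PTree.size).getD 0

/-- A cost function over `α`: a real-valued function on `(𝒳 ∪ {−}) × (𝒳 ∪ {−})`,
where the gap symbol `−` is modelled by `none`. -/
abbrev Cost (α : Type) := Option α → Option α → ℝ

/-- `c` is non-negative. -/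
def Nonneg {α : Type} (c : Cost α) : Prop := ∀ x y, 0 ≤ c x y
/-- `c` is self-equal. -/
def SelfEq {α : Type} (c : Cost α) : Prop := ∀ x, c x x = 0
/-- `c` is discernible. -/
def Discernible {α : Type} (c : Cost α) : Prop := ∀ x y, x ≠ y → 0 < c x y
/-- `c` is symmetric. -/
def Symm {α : Type} (c : Cost α) : Prop := ∀ x y, c x y = c y x
/-- `c` conforms to the triangular inequality. -/
def Triangle {α : Type} (c : Cost α) : Prop := ∀ x y z, c x z ≤ c x y + c y z

/-- Deletion of the first root: its children are spliced into its place. -/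
def delRoot {α : Type} : Forest α → Forest α
  | [] => []
  | PTree.node _ cs :: ts => cs ++ ts

/-- Replacement of the label of the first root by `y`. -/
def repRoot {α : Type} (y : α) : Forest α → Forest α
  | [] => []
  | PTree.node _ cs :: ts => PTree.node y cs :: ts

/-- Insertion of a new root labeled `y` at root level, adopting the trees
`l` to `r-1` of the forest as its children. -/
def insRoot {α : Type} (y : α) (l r : ℕ) (F : Forest α) : Forest α :=
  if r > F.length + 1 ∨ l > r ∨ l < 1 then F
  else if l = r then F.take (l - 1) ++ [PTree.node y []] ++ F.drop (l - 1)
  else F.take (l - 1) ++ [PTree.node y ((F.drop (l - 1)).take (r - l))] ++ F.drop (r - 1)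

/-- `del_i`: deletion of the node with pre-order index `i`. -/
def applyDel {α : Type} : ℕ → Forest α → Forest α
  | _, [] => []
  | i, PTree.node a cs :: ts =>
    if i < 1 then PTree.node a cs :: ts
    else if i = 1 then delRoot (PTree.node a cs :: ts)
    else if i ≤ size (PTree.node a cs) then PTree.node a (applyDel (i - 1) cs) :: ts
    else PTree.node a cs :: applyDel (i - size (PTree.node a cs)) ts
  termination_by _ F => sizeOf F

/-- `rep_{i,y}`: replacement of the label of the node with pre-order index `i` by `y`. -/
def applyRep {α : Type} (y : α) : ℕ → Forest α → Forest α
  | _, [] => []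
  | i, PTree.node a cs :: ts =>
    if i < 1 then PTree.node a cs :: ts
    else if i = 1 then repRoot y (PTree.node a cs :: ts)
    else if i ≤ size (PTree.node a cs) then PTree.node a (applyRep y (i - 1) cs) :: ts
    else PTree.node a cs :: applyRep y (i - size (PTree.node a cs)) ts
  termination_by _ F => sizeOf F

/-- `ins_{i,y,l,r}`: insertion of a node labeled `y` as a child of the node with
pre-order index `i` (at root level if `i = 0`), adopting that node's children
`l` through `r-1` as its children. -/
def applyIns {α : Type} (y : α) (l r : ℕ) : ℕ → Forest α → Forest α
  | 0, F => insRoot y l r F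
  | _ + 1, [] => []
  | i + 1, PTree.node a cs :: ts =>
    if i + 1 ≤ size (PTree.node a cs) then PTree.node a (applyIns y l r i cs) :: ts
    else PTree.node a cs :: applyIns y l r (i + 1 - size (PTree.node a cs)) ts
  termination_by _ F => sizeOf F

/-- The standard edits: deletions `del_i`, replacements `rep_{i,y}` and
insertions `ins_{i,y,l,r}`. -/
inductive Edit (α : Type) where
  | del (i : ℕ)
  | rep (i : ℕ) (y : α)
  | ins (i : ℕ) (y : α) (l r : ℕ)

/-- Application of a single edit to a forest. -/
def Edit.apply {α : Type} : Edit α → Forest α → Forest α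
  | .del i, F => applyDel i F
  | .rep i y, F => applyRep y i F
  | .ins i y l r, F => applyIns y l r i F

/-- Application of an edit script `δ̄ = δ₁,…,δ_T` to a forest (left to right). -/
def applyScript {α : Type} (δ : List (Edit α)) (F : Forest α) : Forest α :=
  δ.foldl (fun F e => e.apply F) F

open Classical in
/-- The cost of a single edit with respect to the forest it is applied to:
`0` if the edit leaves the forest unchanged, and otherwise `c(x_i, y)` for a
replacement, `c(x_i, −)` for a deletion and `c(−, y)` for an insertion. -/
noncomputable def editCost {α : Type} (c : Cost α) (e : Edit α) (F : Forest α) : ℝ :=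
  if e.apply F = F then 0
  else
    match e with
    | .del i => c (labelAt F i) none
    | .rep i y => c (labelAt F i) (some y)
    | .ins _ y _ _ => c none (some y)

/-- The cost `c(δ̄, X)` of an edit script: the sum of the costs of its edits,
each evaluated on the forest to which it is applied. -/
noncomputable def scriptCost {α : Type} (c : Cost α) : List (Edit α) → Forest α → ℝ
  | [], _ => 0
  | e :: es, F => editCost c e F + scriptCost c es (e.apply F)

/-- `x̄_k` is a (proper) ancestor of `x̄_i`, expressed via 1-indexed pre-order indices:
the descendants of `x̄_k` occupy exactly the pre-order indices `k+1, …, k + |x̄_k| - 1`. -/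
def AncestorIdx {α : Type} (F : Forest α) (k i : ℕ) : Prop :=
  k < i ∧ i < k + sizeAt F k

/-- A tree mapping between two forests: a set `M ⊆ {1,…,|F|} × {1,…,|G|}` such that
for all `(i,j), (i',j') ∈ M` we have `i = i' ↔ j = j'`, `i ≤ i' ↔ j ≤ j'`, and
`x̄_i` is an ancestor of `x̄_{i'}` iff `ȳ_j` is an ancestor of `ȳ_{j'}`. -/
def IsTreeMapping {α : Type} (F G : Forest α) (M : Finset (ℕ × ℕ)) : Prop :=
  (∀ p ∈ M, 1 ≤ p.1 ∧ p.1 ≤ fsize F ∧ 1 ≤ p.2 ∧ p.2 ≤ fsize G) ∧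
  (∀ p ∈ M, ∀ q ∈ M,
    (p.1 = q.1 ↔ p.2 = q.2) ∧
    (p.1 ≤ q.1 ↔ p.2 ≤ q.2) ∧
    (AncestorIdx F p.1 q.1 ↔ AncestorIdx G p.2 q.2))

/-- The cost `c(M, X, Y)` of a tree mapping: the sum of the replacement costs of
the mapped pairs, the deletion costs of the unmapped nodes of `X`, and the
insertion costs of the unmapped nodes of `Y`. -/
noncomputable def mapCost {α : Type} (c : Cost α) (F G : Forest α) (M : Finset (ℕ × ℕ)) : ℝ :=
  (∑ p ∈ M, c (labelAt F p.1) (labelAt G p.2))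
  + (∑ i ∈ (Finset.Icc 1 (fsize F)).filter (fun i => ∀ p ∈ M, p.1 ≠ i), c (labelAt F i) none)
  + (∑ j ∈ (Finset.Icc 1 (fsize G)).filter (fun j => ∀ p ∈ M, p.2 ≠ j), c none (labelAt G j))

/-- A co-optimal tree mapping: a tree mapping of minimum cost. -/
def IsCoOptimal {α : Type} (c : Cost α) (F G : Forest α) (M : Finset (ℕ × ℕ)) : Prop :=
  IsTreeMapping F G M ∧
  ∀ M' : Finset (ℕ × ℕ), IsTreeMapping F G M' → mapCost c F G M ≤ mapCost c F G M'

section Preorder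
variable {α : Type}

mutual
theorem length_subtreesT (t : PTree α) : (subtreesT t).length = size t := by
  cases t with
  | node a cs => simp only [subtreesT, List.length_cons, length_subtreesL cs, size]; omega
theorem length_subtreesL (F : Forest α) : (subtreesL F).length = sizeL F := by
  cases F with
  | nil => simp [subtreesL, sizeL]
  | cons t ts => simp [subtreesL, sizeL, length_subtreesT t, length_subtreesL ts]
end

theorem preorder_cons (a : α) (cs ts : Forest α) :
    preorder (node a cs :: ts) = node a cs :: (preorder cs ++ preorder ts) := by
  simp [preorder, subtreesL, subtreesT]

theorem preorder_append (A B : Forest α) : preorder (A ++ B) = preorder A ++ preorder B := by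
  induction A with
  | nil => simp [preorder, subtreesL]
  | cons t ts ih => simp_all [preorder, subtreesL]

@[simp] theorem fsize_nil : fsize ([] : Forest α) = 0 := rfl

theorem fsize_cons (a : α) (cs ts : Forest α) :
    fsize (node a cs :: ts) = 1 + fsize cs + fsize ts := by
  simp only [fsize, preorder_cons, List.length_cons, List.length_append]; omega

theorem fsize_append (A B : Forest α) : fsize (A ++ B) = fsize A + fsize B := by
  simp [fsize, preorder_append]

theorem size_node (a : α) (cs : Forest α) : size (node a cs) = 1 + fsize cs := by
  simp [size, fsize, preorder, length_subtreesL]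

theorem treeAt_eq_none_iff {F : Forest α} {j : ℕ} (hj : 1 ≤ j) :
    treeAt F j = none ↔ fsize F < j := by
  simp only [treeAt, List.getElem?_eq_none_iff, fsize]; omega

theorem treeAt_cons_one (a : α) (cs ts : Forest α) :
    treeAt (node a cs :: ts) 1 = some (node a cs) := by
  simp [treeAt, preorder_cons]

theorem treeAt_cons_succ (a : α) (cs ts : Forest α) {j : ℕ} (hj : 1 ≤ j) :
    treeAt (node a cs :: ts) (j + 1) = treeAt (cs ++ ts) j := by
  obtain ⟨k, rfl⟩ : ∃ k, j = k + 1 := ⟨j - 1, by omega⟩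
  simp [treeAt, preorder_cons, preorder_append]

theorem treeAt_append (A B : Forest α) {j : ℕ} (hj : 1 ≤ j) :
    treeAt (A ++ B) j = if j ≤ fsize A then treeAt A j else treeAt B (j - fsize A) := by
  simp only [treeAt, preorder_append]
  split_ifs with h
  · exact List.getElem?_append_left (by simp only [fsize] at h; omega)
  · rw [List.getElem?_append_right (by simp only [fsize] at h; omega)]
    simp only [fsize]; congr 1; omega

end Preorder

section Profile
variable {α : Type}

-- Index `0` is junk: `treeAt F 0 = treeAt F 1` by truncated subtraction, hence the
-- hypotheses `1 ≤ j` throughout.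
def profileAt (F : Forest α) (j : ℕ) : Option (α × ℕ) :=
  (treeAt F j).map fun t => (t.label, t.size)

theorem labelAt_eq (F : Forest α) (j : ℕ) : labelAt F j = (profileAt F j).map Prod.fst := by
  simp only [labelAt, profileAt, Option.map_map]; rfl

theorem sizeAt_eq (F : Forest α) (j : ℕ) : sizeAt F j = ((profileAt F j).map Prod.snd).getD 0 := by
  simp only [sizeAt, profileAt, Option.map_map]; rfl

theorem profileAt_eq_none_iff {F : Forest α} {j : ℕ} (hj : 1 ≤ j) :
    profileAt F j = none ↔ fsize F < j := by
  simp [profileAt, treeAt_eq_none_iff hj]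

theorem exists_profileAt_eq_some {F : Forest α} {j : ℕ} (h1 : 1 ≤ j) (h2 : j ≤ fsize F) :
    ∃ p, profileAt F j = some p :=
  Option.ne_none_iff_exists'.1 fun h => by rw [profileAt_eq_none_iff h1] at h; omega

theorem labelAt_eq_none_iff {F : Forest α} {j : ℕ} (hj : 1 ≤ j) :
    labelAt F j = none ↔ fsize F < j := by
  rw [labelAt_eq, Option.map_eq_none_iff, profileAt_eq_none_iff hj]

theorem profileAt_nil (j : ℕ) : profileAt ([] : Forest α) j = none := by
  simp [profileAt, treeAt, preorder, subtreesL]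

theorem profileAt_cons_one (a : α) (cs ts : Forest α) :
    profileAt (node a cs :: ts) 1 = some (a, 1 + fsize cs) := by
  simp [profileAt, treeAt_cons_one, label, size_node]

theorem profileAt_cons_succ (a : α) (cs ts : Forest α) {j : ℕ} (hj : 1 ≤ j) :
    profileAt (node a cs :: ts) (j + 1) = profileAt (cs ++ ts) j := by
  simp only [profileAt, treeAt_cons_succ a cs ts hj]

theorem profileAt_append (A B : Forest α) {j : ℕ} (hj : 1 ≤ j) :
    profileAt (A ++ B) j = if j ≤ fsize A then profileAt A j else profileAt B (j - fsize A) := by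
  simp only [profileAt, treeAt_append A B hj]; split_ifs <;> rfl

theorem profileAt_cons_of_le (a : α) (cs ts : Forest α) {j : ℕ} (h2 : 2 ≤ j)
    (h : j ≤ 1 + fsize cs) : profileAt (node a cs :: ts) j = profileAt cs (j - 1) := by
  obtain ⟨k, rfl⟩ : ∃ k, j = k + 1 := ⟨j - 1, by omega⟩
  rw [profileAt_cons_succ a cs ts (by omega), profileAt_append _ _ (by omega), if_pos (by omega)]
  rfl

theorem profileAt_cons_of_lt (a : α) (cs ts : Forest α) {j : ℕ} (h : 1 + fsize cs < j) :
    profileAt (node a cs :: ts) j = profileAt ts (j - (1 + fsize cs)) := by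
  obtain ⟨k, rfl⟩ : ∃ k, j = k + 1 := ⟨j - 1, by omega⟩
  rw [profileAt_cons_succ a cs ts (by omega), profileAt_append _ _ (by omega), if_neg (by omega)]
  congr 1; omega

theorem add_size_le_of_profileAt {F : Forest α} {j : ℕ} {p : α × ℕ} (hj : 1 ≤ j)
    (hp : profileAt F j = some p) : j + p.2 ≤ fsize F + 1 := by
  match F with
  | [] => simp [profileAt_nil] at hp
  | node a cs :: ts =>
    rw [fsize_cons]
    rcases Nat.lt_or_ge j 2 with hj1 | hj2
    · obtain rfl : j = 1 := by omega
      rw [profileAt_cons_one] at hp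
      cases hp; dsimp only; omega
    rcases le_or_gt j (1 + fsize cs) with hle | hlt
    · rw [profileAt_cons_of_le a cs ts hj2 hle] at hp
      have := add_size_le_of_profileAt (by omega) hp
      omega
    · rw [profileAt_cons_of_lt a cs ts hlt] at hp
      have := add_size_le_of_profileAt (by omega) hp
      omega
  termination_by sizeOf F

theorem add_sizeAt_le {F : Forest α} {j : ℕ} (h1 : 1 ≤ j) (h2 : j ≤ fsize F) :
    j + sizeAt F j ≤ fsize F + 1 := by
  obtain ⟨p, hp⟩ := exists_profileAt_eq_some h1 h2
  simpa [sizeAt_eq, hp] using add_size_le_of_profileAt h1 hp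

theorem one_le_sizeAt {F : Forest α} {j : ℕ} (h1 : 1 ≤ j) (h2 : j ≤ fsize F) : 1 ≤ sizeAt F j := by
  obtain ⟨⟨a, cs⟩, ht⟩ : ∃ t, treeAt F j = some t := Option.ne_none_iff_exists'.1 fun h => by
    rw [treeAt_eq_none_iff h1] at h; omega
  simp [sizeAt, ht, size_node]

theorem eq_of_profileAt_eq {F G : Forest α} (h : ∀ j, 1 ≤ j → profileAt F j = profileAt G j) :
    F = G := by
  match F, G with
  | [], [] => rfl
  | [], node b ds :: us => simpa [profileAt_nil, profileAt_cons_one] using h 1 le_rfl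
  | node a cs :: ts, [] => simpa [profileAt_nil, profileAt_cons_one] using h 1 le_rfl
  | node a cs :: ts, node b ds :: us =>
    have h1 := h 1 le_rfl
    simp only [profileAt_cons_one, Option.some.injEq, Prod.mk.injEq] at h1
    obtain ⟨rfl, hsz⟩ := h1
    have hcs : cs = ds := eq_of_profileAt_eq fun j hj => by
      rcases le_or_gt j (fsize cs) with hle | hlt
      · have := h (j + 1) (by omega)
        rwa [profileAt_cons_of_le a cs ts (by omega) (by omega),
          profileAt_cons_of_le a ds us (by omega) (by omega), Nat.add_sub_cancel] at this
      · rw [(profileAt_eq_none_iff hj).2 hlt, (profileAt_eq_none_iff hj).2 (by omega)]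
    have hts : ts = us := eq_of_profileAt_eq fun j hj => by
      have := h (j + (1 + fsize cs)) (by omega)
      rwa [profileAt_cons_of_lt a cs ts (by omega), profileAt_cons_of_lt a ds us (by omega),
        Nat.add_sub_cancel, ← hsz, Nat.add_sub_cancel] at this
    rw [hcs, hts]
  termination_by sizeOf F

theorem eq_of_labelAt_eq_of_sizeAt_eq {F G : Forest α}
    (hl : ∀ j, 1 ≤ j → labelAt F j = labelAt G j) (hs : ∀ j, 1 ≤ j → sizeAt F j = sizeAt G j) :
    F = G :=
  eq_of_profileAt_eq fun j hj => by
    have hlj := hl j hj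
    have hsj := hs j hj
    simp only [labelAt_eq, sizeAt_eq] at hlj hsj
    revert hlj hsj
    rcases profileAt F j with _ | ⟨a, m⟩ <;> rcases profileAt G j with _ | ⟨b, n⟩ <;> simp_all

end Profile

section Deletion
variable {α : Type}

/-- The node `x̄_{succAbove i j}` of `F` becomes the `j`-th node of `applyDel i F`
(cf. `Fin.succAbove`). -/
def succAbove (i j : ℕ) : ℕ := if j < i then j else j + 1

theorem le_succAbove (i j : ℕ) : j ≤ succAbove i j := by
  unfold succAbove; split_ifs <;> omega

theorem succAbove_le_succ (i j : ℕ) : succAbove i j ≤ j + 1 := by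
  unfold succAbove; split_ifs <;> omega

theorem succAbove_sub {i j k : ℕ} (hi : k ≤ i) (hj : k ≤ j) :
    succAbove (i - k) (j - k) = succAbove i j - k := by
  unfold succAbove; split_ifs <;> omega

theorem applyDel_cons_one (a : α) (cs ts : Forest α) :
    applyDel 1 (node a cs :: ts) = cs ++ ts := by
  simp [applyDel, delRoot]

theorem applyDel_cons_of_le (a : α) (cs ts : Forest α) {i : ℕ} (h2 : 2 ≤ i)
    (h : i ≤ 1 + fsize cs) : applyDel i (node a cs :: ts) = node a (applyDel (i - 1) cs) :: ts := by
  rw [applyDel, if_neg (by omega), if_neg (by omega), if_pos (by rw [size_node]; omega)]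

theorem applyDel_cons_of_lt (a : α) (cs ts : Forest α) {i : ℕ} (h : 1 + fsize cs < i) :
    applyDel i (node a cs :: ts) = node a cs :: applyDel (i - (1 + fsize cs)) ts := by
  rw [applyDel, if_neg (by omega), if_neg (by omega), if_neg (by rw [size_node]; omega),
    size_node]

theorem applyDel_eq_self {i : ℕ} {F : Forest α} (h : i < 1 ∨ fsize F < i) : applyDel i F = F := by
  match F with
  | [] => rw [applyDel]
  | node a cs :: ts =>
    rcases h with h | h
    · rw [applyDel, if_pos h]
    · rw [fsize_cons] at h
      rw [applyDel_cons_of_lt a cs ts (by omega), applyDel_eq_self (by omega)]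
  termination_by sizeOf F

theorem fsize_applyDel {i : ℕ} {F : Forest α} (h1 : 1 ≤ i) (h2 : i ≤ fsize F) :
    fsize (applyDel i F) + 1 = fsize F := by
  match F with
  | [] => simp only [fsize_nil] at h2; omega
  | node a cs :: ts =>
    rw [fsize_cons] at h2 ⊢
    rcases Nat.lt_or_ge i 2 with hi | hi
    · obtain rfl : i = 1 := by omega
      rw [applyDel_cons_one, fsize_append]; omega
    rcases le_or_gt i (1 + fsize cs) with hle | hlt
    · have := fsize_applyDel (F := cs) (i := i - 1) (by omega) (by omega)
      rw [applyDel_cons_of_le a cs ts hi hle, fsize_cons]; omega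
    · have := fsize_applyDel (F := ts) (i := i - (1 + fsize cs)) (by omega) (by omega)
      rw [applyDel_cons_of_lt a cs ts hlt, fsize_cons]; omega
  termination_by sizeOf F

/-- The condition `j < i ∧ i < j + p.2` says that `x̄_j` is a proper ancestor of `x̄_i`:
exactly those subtrees lose a node. -/
theorem profileAt_applyDel {i : ℕ} {F : Forest α} (h1 : 1 ≤ i) (h2 : i ≤ fsize F)
    {j : ℕ} (hj : 1 ≤ j) :
    profileAt (applyDel i F) j = (profileAt F (succAbove i j)).map
      fun p => (p.1, if j < i ∧ i < j + p.2 then p.2 - 1 else p.2) := by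
  match F with
  | [] => simp only [fsize_nil] at h2; omega
  | node a cs :: ts =>
    rw [fsize_cons] at h2
    rcases Nat.lt_or_ge i 2 with hi | hi
    · obtain rfl : i = 1 := by omega
      obtain ⟨k, rfl⟩ : ∃ k, j = k + 1 := ⟨j - 1, by omega⟩
      simp [applyDel_cons_one, succAbove, profileAt_cons_succ a cs ts hj]
    rcases le_or_gt i (1 + fsize cs) with hle | hlt
    · have hcs := fsize_applyDel (F := cs) (i := i - 1) (by omega) (by omega)
      rw [applyDel_cons_of_le a cs ts hi hle]
      rcases Nat.lt_or_ge j 2 with hj1 | hj2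
      · obtain rfl : j = 1 := by omega
        simp only [succAbove, if_pos (show 1 < i by omega), profileAt_cons_one, Option.map_some]
        rw [if_pos (by omega)]
        congr 2; omega
      rcases le_or_gt j (fsize cs) with hjc | hjc
      · have := le_succAbove i j
        have := succAbove_le_succ i j
        rw [profileAt_cons_of_le _ _ _ hj2 (by omega), profileAt_applyDel (by omega) (by omega)
            (by omega), succAbove_sub (by omega) (by omega),
          profileAt_cons_of_le _ _ _ (by omega) (by omega)]
        simp only [show ∀ n, (j - 1 < i - 1 ∧ i - 1 < j - 1 + n) ↔ (j < i ∧ i < j + n) by omega]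
      · rw [profileAt_cons_of_lt _ _ _ (by omega), succAbove, if_neg (by omega),
          profileAt_cons_of_lt _ _ _ (by omega), show j + 1 - (1 + fsize cs) =
            j - (1 + fsize (applyDel (i - 1) cs)) by omega]
        simp [show ¬ j < i by omega]
    · have hts := fsize_applyDel (F := ts) (i := i - (1 + fsize cs)) (by omega) (by omega)
      rw [applyDel_cons_of_lt a cs ts hlt]
      rcases Nat.lt_or_ge j 2 with hj1 | hj2
      · obtain rfl : j = 1 := by omega
        rw [succAbove, if_pos (by omega), profileAt_cons_one, profileAt_cons_one, Option.map_some,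
          if_neg (by omega)]
      rcases le_or_gt j (1 + fsize cs) with hjc | hjc
      · rw [profileAt_cons_of_le _ _ _ hj2 hjc, succAbove, if_pos (by omega),
          profileAt_cons_of_le _ _ _ hj2 hjc]
        -- `x̄_j` lies in the first tree, which ends before `x̄_i`
        have hid : ∀ p, profileAt cs (j - 1) = some p →
            (p.1, if j < i ∧ i < j + p.2 then p.2 - 1 else p.2) = p := fun p hp => by
          have := add_size_le_of_profileAt (by omega) hp
          rw [if_neg (by omega)]
        rw [Option.map_congr hid, Option.map_id']
      · have := le_succAbove i j
        rw [profileAt_cons_of_lt _ _ _ hjc, profileAt_applyDel (by omega) (by omega) (by omega),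
          succAbove_sub (by omega) (by omega), profileAt_cons_of_lt _ _ _ (by omega)]
        simp only [show ∀ n, (j - (1 + fsize cs) < i - (1 + fsize cs) ∧
          i - (1 + fsize cs) < j - (1 + fsize cs) + n) ↔ (j < i ∧ i < j + n) by omega]
  termination_by sizeOf F

theorem applyDel_ne_self {i : ℕ} {F : Forest α} (h1 : 1 ≤ i) (h2 : i ≤ fsize F) :
    applyDel i F ≠ F := fun h => by
  have := fsize_applyDel h1 h2
  rw [h] at this
  omega

theorem labelAt_applyDel {i : ℕ} {F : Forest α} (h1 : 1 ≤ i) (h2 : i ≤ fsize F)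
    {j : ℕ} (hj : 1 ≤ j) : labelAt (applyDel i F) j = labelAt F (succAbove i j) := by
  rw [labelAt_eq, labelAt_eq, profileAt_applyDel h1 h2 hj, Option.map_map]; rfl

theorem ancestorIdx_applyDel {i : ℕ} {F : Forest α} (h1 : 1 ≤ i) (h2 : i ≤ fsize F)
    {k j : ℕ} (hk : 1 ≤ k) :
    AncestorIdx (applyDel i F) k j ↔ AncestorIdx F (succAbove i k) (succAbove i j) := by
  simp only [AncestorIdx, sizeAt_eq, profileAt_applyDel h1 h2 hk, succAbove]
  rcases profileAt F (if k < i then k else k + 1) with _ | p <;>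
    simp only [Option.map_none, Option.map_some, Option.getD_none, Option.getD_some] <;>
    split_ifs <;> omega

end Deletion

section Replacement
variable {α : Type}

theorem applyRep_cons_one (y a : α) (cs ts : Forest α) :
    applyRep y 1 (node a cs :: ts) = node y cs :: ts := by
  simp [applyRep, repRoot]

theorem applyRep_cons_of_le (y a : α) (cs ts : Forest α) {i : ℕ} (h2 : 2 ≤ i)
    (h : i ≤ 1 + fsize cs) :
    applyRep y i (node a cs :: ts) = node a (applyRep y (i - 1) cs) :: ts := by
  rw [applyRep, if_neg (by omega), if_neg (by omega), if_pos (by rw [size_node]; omega)]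

theorem applyRep_cons_of_lt (y a : α) (cs ts : Forest α) {i : ℕ} (h : 1 + fsize cs < i) :
    applyRep y i (node a cs :: ts) = node a cs :: applyRep y (i - (1 + fsize cs)) ts := by
  rw [applyRep, if_neg (by omega), if_neg (by omega), if_neg (by rw [size_node]; omega),
    size_node]

theorem fsize_applyRep (y : α) (i : ℕ) (F : Forest α) : fsize (applyRep y i F) = fsize F := by
  match F with
  | [] => rw [applyRep]
  | node a cs :: ts =>
    rcases Nat.lt_or_ge i 1 with hi | hi
    · rw [applyRep, if_pos hi]
    rcases Nat.lt_or_ge i 2 with hi1 | hi2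
    · obtain rfl : i = 1 := by omega
      rw [applyRep_cons_one, fsize_cons, fsize_cons]
    rcases le_or_gt i (1 + fsize cs) with hle | hlt
    · rw [applyRep_cons_of_le y a cs ts hi2 hle, fsize_cons, fsize_cons, fsize_applyRep]
    · rw [applyRep_cons_of_lt y a cs ts hlt, fsize_cons, fsize_cons, fsize_applyRep]
  termination_by sizeOf F

theorem profileAt_applyRep (y : α) (i : ℕ) (F : Forest α) {j : ℕ} (hj : 1 ≤ j) :
    profileAt (applyRep y i F) j =
      if j = i then (profileAt F j).map fun p => (y, p.2) else profileAt F j := by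
  match F with
  | [] => simp [applyRep, profileAt_nil]
  | node a cs :: ts =>
    rcases Nat.lt_or_ge i 1 with hi | hi
    · rw [applyRep, if_pos hi, if_neg (by omega)]
    rcases Nat.lt_or_ge i 2 with hi1 | hi2
    · obtain rfl : i = 1 := by omega
      rw [applyRep_cons_one]
      rcases Nat.lt_or_ge j 2 with hj1 | hj2
      · obtain rfl : j = 1 := by omega
        simp [profileAt_cons_one]
      rw [if_neg (by omega)]
      obtain ⟨k, rfl⟩ : ∃ k, j = k + 1 := ⟨j - 1, by omega⟩
      rw [profileAt_cons_succ _ _ _ (by omega), profileAt_cons_succ _ _ _ (by omega)]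
    rcases Nat.lt_or_ge j 2 with hj1 | hj2
    · obtain rfl : j = 1 := by omega
      rw [if_neg (by omega)]
      rcases le_or_gt i (1 + fsize cs) with hle | hlt
      · rw [applyRep_cons_of_le y a cs ts hi2 hle, profileAt_cons_one, profileAt_cons_one,
          fsize_applyRep]
      · rw [applyRep_cons_of_lt y a cs ts hlt, profileAt_cons_one, profileAt_cons_one]
    rcases le_or_gt i (1 + fsize cs) with hle | hlt <;>
      rcases le_or_gt j (1 + fsize cs) with hjc | hjc
    · rw [applyRep_cons_of_le y a cs ts hi2 hle, profileAt_cons_of_le _ _ _ hj2 hjc,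
        profileAt_cons_of_le _ _ _ hj2 (by rwa [fsize_applyRep]),
        profileAt_applyRep y (i - 1) cs (by omega)]
      simp only [show j - 1 = i - 1 ↔ j = i by omega]
    · rw [applyRep_cons_of_le y a cs ts hi2 hle, profileAt_cons_of_lt _ _ _ hjc,
        profileAt_cons_of_lt _ _ _ (by rwa [fsize_applyRep]), fsize_applyRep, if_neg (by omega)]
    · rw [applyRep_cons_of_lt y a cs ts hlt, profileAt_cons_of_le _ _ _ hj2 hjc,
        profileAt_cons_of_le _ _ _ hj2 hjc, if_neg (by omega)]
    · rw [applyRep_cons_of_lt y a cs ts hlt, profileAt_cons_of_lt _ _ _ hjc,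
        profileAt_cons_of_lt _ _ _ hjc, profileAt_applyRep y _ ts (by omega)]
      simp only [show j - (1 + fsize cs) = i - (1 + fsize cs) ↔ j = i by omega]
  termination_by sizeOf F

theorem applyRep_eq_self {y : α} {i : ℕ} {F : Forest α} (h : i < 1 ∨ fsize F < i) :
    applyRep y i F = F :=
  eq_of_profileAt_eq fun j hj => by
    rw [profileAt_applyRep y i F hj]
    split_ifs with hji
    · subst hji; rw [(profileAt_eq_none_iff hj).2 (by omega)]; rfl
    · rfl

theorem labelAt_applyRep (y : α) {i : ℕ} {F : Forest α} (h1 : 1 ≤ i) (h2 : i ≤ fsize F) :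
    labelAt (applyRep y i F) i = some y := by
  rw [labelAt_eq, profileAt_applyRep y i F h1, if_pos rfl]
  obtain ⟨p, hp⟩ := exists_profileAt_eq_some h1 h2
  simp [hp]

theorem labelAt_applyRep_of_ne (y : α) {i : ℕ} (F : Forest α) {j : ℕ} (hj : 1 ≤ j)
    (hji : j ≠ i) : labelAt (applyRep y i F) j = labelAt F j := by
  rw [labelAt_eq, labelAt_eq, profileAt_applyRep y i F hj, if_neg hji]

theorem sizeAt_applyRep (y : α) (i : ℕ) (F : Forest α) {j : ℕ} (hj : 1 ≤ j) :
    sizeAt (applyRep y i F) j = sizeAt F j := by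
  rw [sizeAt_eq, sizeAt_eq, profileAt_applyRep y i F hj]
  split_ifs <;> simp [Option.map_map, Function.comp_def]

theorem ancestorIdx_applyRep (y : α) (i : ℕ) (F : Forest α) {k j : ℕ} (hk : 1 ≤ k) :
    AncestorIdx (applyRep y i F) k j ↔ AncestorIdx F k j := by
  simp only [AncestorIdx, sizeAt_applyRep y i F hk]

end Replacement

section Insertion
variable {α : Type}

theorem applyDel_splice (A : Forest α) (y : α) (cs B : Forest α) :
    applyDel (fsize A + 1) (A ++ node y cs :: B) = A ++ (cs ++ B) := by
  match A with
  | [] => simp [applyDel_cons_one]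
  | node a as :: ts =>
    rw [List.cons_append, fsize_cons, applyDel_cons_of_lt _ _ _ (by omega),
      show 1 + fsize as + fsize ts + 1 - (1 + fsize as) = fsize ts + 1 by omega, applyDel_splice]
    rfl
  termination_by sizeOf A

theorem labelAt_splice (A : Forest α) (y : α) (cs B : Forest α) :
    labelAt (A ++ node y cs :: B) (fsize A + 1) = some y := by
  rw [labelAt_eq, profileAt_append _ _ (by omega), if_neg (by omega),
    show fsize A + 1 - fsize A = 1 by omega, profileAt_cons_one]
  rfl

theorem insRoot_of_valid (y : α) {l r : ℕ} {F : Forest α} (hr : r ≤ F.length + 1) (hlr : l ≤ r)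
    (hl : 1 ≤ l) :
    insRoot y l r F = F.take (l - 1) ++ node y ((F.drop (l - 1)).take (r - l)) :: F.drop (r - 1) := by
  rw [insRoot, if_neg (by omega)]
  split_ifs with h
  · subst h; simp
  · simp

theorem insRoot_cons (y : α) (t : PTree α) (F : Forest α) {l : ℕ} (hl : 1 ≤ l) (r : ℕ) :
    insRoot y (l + 1) (r + 1) (t :: F) = t :: insRoot y l r F := by
  by_cases hv : r ≤ F.length + 1 ∧ l ≤ r
  · rw [insRoot_of_valid y (by simp only [List.length_cons]; omega) (by omega) (by omega), insRoot_of_valid y hv.1 hv.2 hl,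
      show l + 1 - 1 = (l - 1) + 1 by omega, show r + 1 - 1 = (r - 1) + 1 by omega]
    simp
  · rw [insRoot, if_pos (by simp only [List.length_cons]; omega), insRoot, if_pos (by omega)]

theorem applyIns_cons_of_le (y a : α) {l r i : ℕ} (cs ts : Forest α) (h : i + 1 ≤ 1 + fsize cs) :
    applyIns y l r (i + 1) (node a cs :: ts) = node a (applyIns y l r i cs) :: ts := by
  rw [applyIns, if_pos (by rw [size_node]; omega)]

theorem applyIns_cons_of_lt (y a : α) {l r i : ℕ} (cs ts : Forest α) (h : 1 + fsize cs < i + 1) :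
    applyIns y l r (i + 1) (node a cs :: ts) =
      node a cs :: applyIns y l r (i + 1 - (1 + fsize cs)) ts := by
  rw [applyIns, if_neg (by rw [size_node]; omega), size_node]

theorem applyIns_eq_self {y : α} {l r i : ℕ} {F : Forest α} (h : fsize F < i) :
    applyIns y l r i F = F := by
  match i, F with
  | i + 1, [] => rw [applyIns]
  | i + 1, node a cs :: ts =>
    rw [fsize_cons] at h
    rw [applyIns_cons_of_lt y a cs ts (by omega), applyIns_eq_self (by omega)]
  termination_by sizeOf F

theorem exists_applyDel_insRoot_eq {y : α} {l r : ℕ} {F : Forest α} (h : insRoot y l r F ≠ F) :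
    ∃ p, 1 ≤ p ∧ applyDel p (insRoot y l r F) = F ∧ labelAt (insRoot y l r F) p = some y := by
  have hv : r ≤ F.length + 1 ∧ l ≤ r ∧ 1 ≤ l := by
    by_contra hv
    exact h (by rw [insRoot, if_pos (by omega)])
  rw [insRoot_of_valid y hv.1 hv.2.1 hv.2.2]
  refine ⟨fsize (F.take (l - 1)) + 1, by omega, ?_, labelAt_splice _ _ _ _⟩
  rw [applyDel_splice, ← List.append_assoc, ← List.take_add,
    show l - 1 + (r - l) = r - 1 by omega, List.take_append_drop]

theorem exists_applyDel_applyIns_eq {y : α} {l r i : ℕ} {F : Forest α}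
    (h : applyIns y l r i F ≠ F) :
    ∃ p, 1 ≤ p ∧ p ≤ fsize (applyIns y l r i F) ∧ applyDel p (applyIns y l r i F) = F ∧
      labelAt (applyIns y l r i F) p = some y := by
  suffices ∃ p, 1 ≤ p ∧ applyDel p (applyIns y l r i F) = F ∧
      labelAt (applyIns y l r i F) p = some y by
    obtain ⟨p, hp1, hdel, hlab⟩ := this
    refine ⟨p, hp1, ?_, hdel, hlab⟩
    by_contra hp2
    have := applyDel_eq_self (i := p) (F := applyIns y l r i F) (by omega)
    exact h (this.symm.trans hdel)
  match i, F with
  | 0, F => rw [applyIns] at h ⊢; exact exists_applyDel_insRoot_eq h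
  | i + 1, [] => exact absurd (by rw [applyIns]) h
  | i + 1, node a cs :: ts =>
    rcases le_or_gt (i + 1) (1 + fsize cs) with hle | hlt
    · rw [applyIns_cons_of_le y a cs ts hle] at h ⊢
      obtain ⟨p, hp1, hp2, hdel, hlab⟩ :=
        exists_applyDel_applyIns_eq (F := cs) fun he => h (by rw [he])
      refine ⟨p + 1, by omega, ?_, ?_⟩
      · rw [applyDel_cons_of_le _ _ _ (by omega) (by omega), Nat.add_sub_cancel, hdel]
      · rwa [labelAt_eq, profileAt_cons_of_le _ _ _ (by omega) (by omega), Nat.add_sub_cancel,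
          ← labelAt_eq]
    · rw [applyIns_cons_of_lt y a cs ts hlt] at h ⊢
      obtain ⟨p, hp1, -, hdel, hlab⟩ :=
        exists_applyDel_applyIns_eq (F := ts) fun he => h (by rw [he])
      refine ⟨p + (1 + fsize cs), by omega, ?_, ?_⟩
      · rw [applyDel_cons_of_lt _ _ _ (by omega), Nat.add_sub_cancel, hdel]
      · rwa [labelAt_eq, profileAt_cons_of_lt _ _ _ (by omega), Nat.add_sub_cancel,
          ← labelAt_eq]
  termination_by sizeOf F

theorem exists_applyIns_cons_eq {y : α} {l r i : ℕ} {F : Forest α} (a : α) (cs : Forest α)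
    (h : applyIns y l r i F ≠ F) :
    ∃ i' l' r', applyIns y l' r' i' (node a cs :: F) = node a cs :: applyIns y l r i F := by
  rcases i with _ | i
  · -- at root level, the same trees are adopted one position further right
    have hl : 1 ≤ l := by
      by_contra hl
      exact h (by rw [applyIns, insRoot, if_pos (by omega)])
    exact ⟨0, l + 1, r + 1, by rw [applyIns, applyIns, insRoot_cons y _ _ hl]⟩
  · refine ⟨i + 1 + fsize cs + 1, l, r, ?_⟩
    rw [applyIns_cons_of_lt y a cs F (by omega), show i + 1 + fsize cs + 1 - (1 + fsize cs) = i + 1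
      by omega]

theorem exists_applyIns_applyDel_eq {j : ℕ} {F : Forest α} (h1 : 1 ≤ j) (h2 : j ≤ fsize F) :
    ∃ (i l r : ℕ) (y : α), labelAt F j = some y ∧ applyIns y l r i (applyDel j F) = F := by
  match F with
  | [] => simp only [fsize_nil] at h2; omega
  | node a cs :: ts =>
    rw [fsize_cons] at h2
    rcases Nat.lt_or_ge j 2 with hj1 | hj2
    · obtain rfl : j = 1 := by omega
      refine ⟨0, 1, cs.length + 1, a, by simp [labelAt_eq, profileAt_cons_one], ?_⟩
      rw [applyDel_cons_one, applyIns, insRoot_of_valid _ (by simp) (by omega) le_rfl]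
      simp
    rcases le_or_gt j (1 + fsize cs) with hle | hlt
    · obtain ⟨i, l, r, y, hlab, hins⟩ :=
        exists_applyIns_applyDel_eq (F := cs) (j := j - 1) (by omega) (by omega)
      have hne : applyIns y l r i (applyDel (j - 1) cs) ≠ applyDel (j - 1) cs := by
        rw [hins]; exact (applyDel_ne_self (by omega) (by omega)).symm
      have hi : i + 1 ≤ 1 + fsize (applyDel (j - 1) cs) := by
        by_contra hi
        exact hne (applyIns_eq_self (F := applyDel (j - 1) cs) (by omega))
      refine ⟨i + 1, l, r, y, ?_, ?_⟩
      · rwa [labelAt_eq, profileAt_cons_of_le _ _ _ hj2 hle, ← labelAt_eq]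
      · rw [applyDel_cons_of_le _ _ _ hj2 hle, applyIns_cons_of_le _ _ _ _ hi, hins]
    · obtain ⟨i, l, r, y, hlab, hins⟩ :=
        exists_applyIns_applyDel_eq (F := ts) (j := j - (1 + fsize cs)) (by omega) (by omega)
      have hne : applyIns y l r i (applyDel (j - (1 + fsize cs)) ts) ≠
          applyDel (j - (1 + fsize cs)) ts := by
        rw [hins]; exact (applyDel_ne_self (by omega) (by omega)).symm
      obtain ⟨i', l', r', hcons⟩ := exists_applyIns_cons_eq a cs hne
      refine ⟨i', l', r', y, ?_, ?_⟩
      · rwa [labelAt_eq, profileAt_cons_of_lt _ _ _ hlt, ← labelAt_eq]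
      · rw [applyDel_cons_of_lt _ _ _ hlt, hcons, hins]
  termination_by sizeOf F

end Insertion

section Scripts
variable {α : Type}

theorem applyScript_append (δ₁ δ₂ : List (Edit α)) (F : Forest α) :
    applyScript (δ₁ ++ δ₂) F = applyScript δ₂ (applyScript δ₁ F) := by
  simp [applyScript, List.foldl_append]

theorem scriptCost_append (c : Cost α) (δ₁ δ₂ : List (Edit α)) (F : Forest α) :
    scriptCost c (δ₁ ++ δ₂) F = scriptCost c δ₁ F + scriptCost c δ₂ (applyScript δ₁ F) := by
  induction δ₁ generalizing F with
  | nil => simp [scriptCost, applyScript]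
  | cons e es ih =>
    rw [List.cons_append, scriptCost, scriptCost, ih, add_assoc]
    rfl

theorem editCost_of_apply_eq {c : Cost α} {e : Edit α} {F : Forest α} (h : e.apply F = F) :
    editCost c e F = 0 := by
  unfold editCost; exact if_pos h

theorem editCost_del_of_ne {c : Cost α} {i : ℕ} {F : Forest α} (h : applyDel i F ≠ F) :
    editCost c (.del i) F = c (labelAt F i) none := by
  unfold editCost; exact if_neg h

theorem editCost_rep_of_ne {c : Cost α} {i : ℕ} {y : α} {F : Forest α}
    (h : applyRep y i F ≠ F) : editCost c (.rep i y) F = c (labelAt F i) (some y) := by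
  unfold editCost; exact if_neg h

theorem editCost_ins_of_ne {c : Cost α} {i l r : ℕ} {y : α} {F : Forest α}
    (h : applyIns y l r i F ≠ F) : editCost c (.ins i y l r) F = c none (some y) := by
  unfold editCost; exact if_neg h

theorem editCost_rep_le {c : Cost α} (hnn : Nonneg c) (i : ℕ) (y : α) (F : Forest α) :
    editCost c (.rep i y) F ≤ c (labelAt F i) (some y) := by
  unfold editCost
  split_ifs
  exacts [hnn _ _, le_rfl]

theorem scriptCost_del_cons (c : Cost α) {i : ℕ} {F : Forest α} (h1 : 1 ≤ i) (h2 : i ≤ fsize F)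
    (δ : List (Edit α)) :
    scriptCost c (.del i :: δ) F = c (labelAt F i) none + scriptCost c δ (applyDel i F) := by
  rw [scriptCost, editCost_del_of_ne (applyDel_ne_self h1 h2)]
  rfl

theorem exists_script_append_ins (c : Cost α) {j : ℕ} {F G : Forest α} (h1 : 1 ≤ j)
    (h2 : j ≤ fsize G) {δ : List (Edit α)} (happ : applyScript δ F = applyDel j G) :
    ∃ δ', applyScript δ' F = G ∧ scriptCost c δ' F = scriptCost c δ F + c none (labelAt G j) := by
  obtain ⟨i, l, r, y, hlab, hins⟩ := exists_applyIns_applyDel_eq h1 h2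
  have hne : applyIns y l r i (applyDel j G) ≠ applyDel j G := by
    rw [hins]; exact (applyDel_ne_self h1 h2).symm
  refine ⟨δ ++ [.ins i y l r], by rw [applyScript_append, happ]; exact hins, ?_⟩
  rw [scriptCost_append, happ, scriptCost, scriptCost, editCost_ins_of_ne hne, hlab, add_zero]

end Scripts

section Mapping
variable {α : Type}

noncomputable def matchExcess (c : Cost α) (F G : Forest α) (p : ℕ × ℕ) : ℝ :=
  c (labelAt F p.1) (labelAt G p.2) - c (labelAt F p.1) none - c none (labelAt G p.2)

theorem IsTreeMapping.mono {F G : Forest α} {M M' : Finset (ℕ × ℕ)} (hM : IsTreeMapping F G M)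
    (h : M' ⊆ M) : IsTreeMapping F G M' :=
  ⟨fun p hp => hM.1 p (h hp), fun p hp q hq => hM.2 p (h hp) q (h hq)⟩

theorem IsTreeMapping.injOn_fst {F G : Forest α} {M : Finset (ℕ × ℕ)} (hM : IsTreeMapping F G M) :
    Set.InjOn Prod.fst (M : Set (ℕ × ℕ)) :=
  fun p hp q hq h => Prod.ext h ((hM.2 p hp q hq).1.1 h)

theorem IsTreeMapping.injOn_snd {F G : Forest α} {M : Finset (ℕ × ℕ)} (hM : IsTreeMapping F G M) :
    Set.InjOn Prod.snd (M : Set (ℕ × ℕ)) :=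
  fun p hp q hq h => Prod.ext ((hM.2 p hp q hq).1.2 h) h

theorem IsTreeMapping.swap {F G : Forest α} {M : Finset (ℕ × ℕ)} (hM : IsTreeMapping F G M) :
    IsTreeMapping G F (M.image Prod.swap) := by
  simp only [IsTreeMapping, Finset.forall_mem_image, Prod.fst_swap, Prod.snd_swap]
  exact ⟨fun p hp => by have := hM.1 p hp; omega, fun p hp q hq =>
    let h := hM.2 p hp q hq; ⟨h.1.symm, h.2.1.symm, h.2.2.symm⟩⟩

theorem mapCost_swap (c : Cost α) (F G : Forest α) (M : Finset (ℕ × ℕ)) :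
    mapCost c F G M = mapCost (flip c) G F (M.image Prod.swap) := by
  simp only [mapCost, Finset.sum_image fun p _ q _ h => Prod.swap_injective h,
    Finset.forall_mem_image, Prod.fst_swap, Prod.snd_swap, flip]
  ring

theorem mapCost_eq_sum_matchExcess (c : Cost α) {F G : Forest α} {M : Finset (ℕ × ℕ)}
    (hM : IsTreeMapping F G M) :
    mapCost c F G M = ∑ i ∈ Finset.Icc 1 (fsize F), c (labelAt F i) none
      + ∑ j ∈ Finset.Icc 1 (fsize G), c none (labelAt G j) + ∑ p ∈ M, matchExcess c F G p := by
  have hfst : (Finset.Icc 1 (fsize F)).filter (fun i => ¬ ∀ p ∈ M, p.1 ≠ i) = M.image Prod.fst := by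
    ext i
    simp only [Finset.mem_filter, Finset.mem_image, Finset.mem_Icc, not_forall, not_not]
    exact ⟨fun ⟨_, p, hp, h⟩ => ⟨p, hp, h⟩, fun ⟨p, hp, h⟩ => ⟨by have := hM.1 p hp; omega, p, hp, h⟩⟩
  have hsnd : (Finset.Icc 1 (fsize G)).filter (fun j => ¬ ∀ p ∈ M, p.2 ≠ j) = M.image Prod.snd := by
    ext j
    simp only [Finset.mem_filter, Finset.mem_image, Finset.mem_Icc, not_forall, not_not]
    exact ⟨fun ⟨_, p, hp, h⟩ => ⟨p, hp, h⟩, fun ⟨p, hp, h⟩ => ⟨by have := hM.1 p hp; omega, p, hp, h⟩⟩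
  rw [← Finset.sum_filter_add_sum_filter_not _ (fun i => ∀ p ∈ M, p.1 ≠ i),
    ← Finset.sum_filter_add_sum_filter_not (Finset.Icc 1 (fsize G)) (fun j => ∀ p ∈ M, p.2 ≠ j),
    hfst, hsnd, Finset.sum_image hM.injOn_fst, Finset.sum_image hM.injOn_snd, mapCost]
  simp only [matchExcess, Finset.sum_sub_distrib]
  ring

end Mapping

section MappingEdits
variable {α : Type}

theorem succAbove_strictMono (i : ℕ) : StrictMono (succAbove i) := by
  intro a b h; unfold succAbove; split_ifs <;> omega

theorem sum_Icc_eq_add_sum_succAbove (f : ℕ → ℝ) {n i : ℕ} (h1 : 1 ≤ i) (h2 : i ≤ n) :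
    ∑ k ∈ Finset.Icc 1 n, f k = f i + ∑ j ∈ Finset.Icc 1 (n - 1), f (succAbove i j) := by
  have himg : (Finset.Icc 1 (n - 1)).image (succAbove i) = (Finset.Icc 1 n).erase i := by
    ext k
    simp only [Finset.mem_image, Finset.mem_erase, Finset.mem_Icc, succAbove]
    constructor
    · rintro ⟨j, hj, rfl⟩; split_ifs <;> omega
    · intro hk; exact ⟨if k < i then k else k - 1, by split_ifs <;> omega⟩
  rw [← Finset.add_sum_erase _ f (Finset.mem_Icc.2 ⟨h1, h2⟩), ← himg,
    Finset.sum_image (succAbove_strictMono i).injective.injOn]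

theorem isTreeMapping_image_succAbove_iff {i : ℕ} {F H : Forest α} (h1 : 1 ≤ i)
    (h2 : i ≤ fsize F) {M : Finset (ℕ × ℕ)} :
    IsTreeMapping F H (M.image (Prod.map (succAbove i) id)) ↔
      IsTreeMapping (applyDel i F) H M := by
  have hfs := fsize_applyDel h1 h2
  have hmono := succAbove_strictMono i
  simp only [IsTreeMapping, Finset.forall_mem_image, Prod.map_fst, Prod.map_snd, id,
    hmono.injective.eq_iff, hmono.le_iff_le]
  have hbound : ∀ p : ℕ × ℕ,
      (1 ≤ succAbove i p.1 ∧ succAbove i p.1 ≤ fsize F ∧ 1 ≤ p.2 ∧ p.2 ≤ fsize H) ↔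
        (1 ≤ p.1 ∧ p.1 ≤ fsize (applyDel i F) ∧ 1 ≤ p.2 ∧ p.2 ≤ fsize H) := fun p => by
    unfold succAbove; split_ifs <;> omega
  simp only [hbound]
  refine and_congr_right fun hb => forall_congr' fun p => forall_congr' fun hp =>
    forall_congr' fun q => forall_congr' fun _ => ?_
  rw [ancestorIdx_applyDel h1 h2 (hb hp).1]

theorem mapCost_image_succAbove (c : Cost α) {i : ℕ} {F H : Forest α} (h1 : 1 ≤ i)
    (h2 : i ≤ fsize F) {M : Finset (ℕ × ℕ)} (hM : IsTreeMapping (applyDel i F) H M) :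
    mapCost c F H (M.image (Prod.map (succAbove i) id)) =
      c (labelAt F i) none + mapCost c (applyDel i F) H M := by
  have hfs := fsize_applyDel h1 h2
  have hinj : Set.InjOn (Prod.map (succAbove i) id) (M : Set (ℕ × ℕ)) :=
    ((succAbove_strictMono i).injective.prodMap Function.injective_id).injOn
  rw [mapCost_eq_sum_matchExcess c ((isTreeMapping_image_succAbove_iff h1 h2).2 hM),
    mapCost_eq_sum_matchExcess c hM, Finset.sum_image hinj,
    sum_Icc_eq_add_sum_succAbove _ h1 h2, show fsize F - 1 = fsize (applyDel i F) by omega]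
  have hlab : ∀ j, 1 ≤ j → labelAt F (succAbove i j) = labelAt (applyDel i F) j :=
    fun j hj => (labelAt_applyDel h1 h2 hj).symm
  have hdel : ∑ j ∈ Finset.Icc 1 (fsize (applyDel i F)), c (labelAt F (succAbove i j)) none =
      ∑ j ∈ Finset.Icc 1 (fsize (applyDel i F)), c (labelAt (applyDel i F) j) none :=
    Finset.sum_congr rfl fun j hj => by rw [hlab j (Finset.mem_Icc.1 hj).1]
  have hmatch : ∑ p ∈ M, matchExcess c F H (Prod.map (succAbove i) id p) =
      ∑ p ∈ M, matchExcess c (applyDel i F) H p :=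
    Finset.sum_congr rfl fun p hp => by
      simp only [matchExcess, Prod.map_fst, Prod.map_snd, id, hlab p.1 (hM.1 p hp).1]
  rw [hdel, hmatch]
  ring

theorem exists_image_succAbove_eq {i : ℕ} {M : Finset (ℕ × ℕ)} (hi : ∀ p ∈ M, p.1 ≠ i) :
    ∃ M' : Finset (ℕ × ℕ), M'.image (Prod.map (succAbove i) id) = M := by
  refine ⟨M.image (Prod.map (fun k => if k < i then k else k - 1) id), ?_⟩
  rw [Finset.image_image]
  refine (Finset.image_congr fun p hp => ?_).trans Finset.image_id
  have := hi p hp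
  simp only [Function.comp, Prod.map, succAbove, id]
  ext
  · simp only; split_ifs <;> omega
  · rfl

theorem IsTreeMapping.exists_applyDel_left (c : Cost α) {i : ℕ} {F H : Forest α}
    {M : Finset (ℕ × ℕ)} (hM : IsTreeMapping F H M) (h1 : 1 ≤ i) (h2 : i ≤ fsize F)
    (hi : ∀ p ∈ M, p.1 ≠ i) :
    ∃ M', IsTreeMapping (applyDel i F) H M' ∧
      mapCost c F H M = c (labelAt F i) none + mapCost c (applyDel i F) H M' := by
  obtain ⟨M', rfl⟩ := exists_image_succAbove_eq hi
  have hM' := (isTreeMapping_image_succAbove_iff h1 h2).1 hM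
  exact ⟨M', hM', mapCost_image_succAbove c h1 h2 hM'⟩

theorem IsTreeMapping.exists_applyDel_right (c : Cost α) {j : ℕ} {F H : Forest α}
    {M : Finset (ℕ × ℕ)} (hM : IsTreeMapping F H M) (h1 : 1 ≤ j) (h2 : j ≤ fsize H)
    (hj : ∀ p ∈ M, p.2 ≠ j) :
    ∃ M', IsTreeMapping F (applyDel j H) M' ∧
      mapCost c F H M = c none (labelAt H j) + mapCost c F (applyDel j H) M' := by
  have hj' : ∀ p ∈ M.image Prod.swap, p.1 ≠ j := by
    simpa only [Finset.forall_mem_image, Prod.fst_swap] using hj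
  obtain ⟨M', hM', hcost⟩ := IsTreeMapping.exists_applyDel_left (flip c) hM.swap h1 h2 hj'
  refine ⟨M'.image Prod.swap, hM'.swap, ?_⟩
  rw [mapCost_swap, hcost, mapCost_swap c F, Finset.image_image, Prod.swap_swap_eq,
    Finset.image_id]
  rfl

theorem mapCost_eq_mapCost_erase_add (c : Cost α) {F G : Forest α} {M : Finset (ℕ × ℕ)}
    (hM : IsTreeMapping F G M) {p : ℕ × ℕ} (hp : p ∈ M) :
    mapCost c F G M = mapCost c F G (M.erase p) + matchExcess c F G p := by
  rw [mapCost_eq_sum_matchExcess c hM, mapCost_eq_sum_matchExcess c (hM.mono (M.erase_subset p)),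
    ← Finset.add_sum_erase M _ hp]
  ring

theorem mapCost_filter_le {c : Cost α} (hnn : Nonneg c) (htr : Triangle c) {F G : Forest α}
    {M : Finset (ℕ × ℕ)} (hM : IsTreeMapping F G M) (i : ℕ) :
    mapCost c F G (M.filter (·.1 ≠ i)) ≤
      mapCost c F G M + c (labelAt F i) none + c none (labelAt F i) := by
  by_cases hex : ∃ p ∈ M, p.1 = i
  · obtain ⟨p, hp, rfl⟩ := hex
    have herase : M.filter (·.1 ≠ p.1) = M.erase p := by
      ext q
      simp only [Finset.mem_filter, Finset.mem_erase]
      exact ⟨fun ⟨hq, hne⟩ => ⟨fun h => hne (h ▸ rfl), hq⟩,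
        fun ⟨hne, hq⟩ => ⟨hq, fun h => hne (hM.injOn_fst hq hp h)⟩⟩
    rw [herase, mapCost_eq_mapCost_erase_add c hM hp, matchExcess]
    linarith [htr none (labelAt F p.1) (labelAt G p.2)]
  · push Not at hex
    rw [Finset.filter_true_of_mem hex]
    linarith [hnn (labelAt F i) none, hnn none (labelAt F i)]

theorem IsTreeMapping.of_applyRep {y : α} {i : ℕ} {F G : Forest α} {M : Finset (ℕ × ℕ)}
    (hM : IsTreeMapping (applyRep y i F) G M) : IsTreeMapping F G M := by
  refine ⟨fun p hp => fsize_applyRep y i F ▸ hM.1 p hp, fun p hp q hq => ?_⟩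
  rw [← ancestorIdx_applyRep y i F (hM.1 p hp).1]
  exact hM.2 p hp q hq

theorem sum_sub_sum_eq_of_eq_of_ne {ι : Type} {s : Finset ι} {f g : ι → ℝ} {a : ι} (ha : a ∈ s)
    (h : ∀ x ∈ s, x ≠ a → f x = g x) : ∑ x ∈ s, f x - ∑ x ∈ s, g x = f a - g a := by
  rw [← Finset.sum_sub_distrib,
    Finset.sum_eq_single_of_mem a ha fun x hx hne => by rw [h x hx hne, sub_self]]

theorem mapCost_le_applyRep {c : Cost α} (htr : Triangle c) {y : α} {i : ℕ} {F G : Forest α}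
    {M : Finset (ℕ × ℕ)} (h1 : 1 ≤ i) (h2 : i ≤ fsize F) (hM : IsTreeMapping (applyRep y i F) G M) :
    mapCost c F G M ≤ c (labelAt F i) (some y) + mapCost c (applyRep y i F) G M := by
  have hlab : ∀ k, 1 ≤ k → k ≠ i → labelAt (applyRep y i F) k = labelAt F k :=
    fun k hk hne => labelAt_applyRep_of_ne y F hk hne
  have hdel := sum_sub_sum_eq_of_eq_of_ne (f := fun k => c (labelAt F k) none)
    (g := fun k => c (labelAt (applyRep y i F) k) none) (Finset.mem_Icc.2 ⟨h1, h2⟩)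
    fun k hk hne => by rw [hlab k (Finset.mem_Icc.1 hk).1 hne]
  rw [mapCost_eq_sum_matchExcess c hM.of_applyRep, mapCost_eq_sum_matchExcess c hM,
    fsize_applyRep]
  simp only [labelAt_applyRep y h1 h2] at hdel
  by_cases hex : ∃ p ∈ M, p.1 = i
  · obtain ⟨p, hp, rfl⟩ := hex
    have hmatch := sum_sub_sum_eq_of_eq_of_ne (f := matchExcess c F G)
      (g := matchExcess c (applyRep y p.1 F) G) hp fun q hq hne => by
        rw [matchExcess, matchExcess,
          hlab q.1 (hM.1 q hq).1 fun h => hne (hM.of_applyRep.injOn_fst hq hp h)]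
    rw [matchExcess, matchExcess, labelAt_applyRep y h1 h2] at hmatch
    linarith [htr (labelAt F p.1) (some y) (labelAt G p.2)]
  · push Not at hex
    have hmatch : ∑ p ∈ M, matchExcess c F G p = ∑ p ∈ M, matchExcess c (applyRep y i F) G p :=
      Finset.sum_congr rfl fun q hq => by rw [matchExcess, matchExcess, hlab q.1 (hM.1 q hq).1 (hex q hq)]
    linarith [htr (labelAt F i) (some y) none]

def diagMapping (n : ℕ) : Finset (ℕ × ℕ) := (Finset.Icc 1 n).image fun i => (i, i)

theorem mapCost_diagMapping (c : Cost α) {F G : Forest α} (h : fsize F = fsize G) :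
    mapCost c F G (diagMapping (fsize F)) =
      ∑ i ∈ Finset.Icc 1 (fsize F), c (labelAt F i) (labelAt G i) := by
  have hF : (Finset.Icc 1 (fsize F)).filter (fun i => ∀ p ∈ diagMapping (fsize F), p.1 ≠ i) = ∅ :=
    Finset.filter_eq_empty_iff.2 fun i hi => by simpa [diagMapping] using hi
  have hG : (Finset.Icc 1 (fsize G)).filter (fun j => ∀ p ∈ diagMapping (fsize F), p.2 ≠ j) = ∅ :=
    Finset.filter_eq_empty_iff.2 fun j hj => by simpa [diagMapping, h] using hj
  rw [mapCost, hF, hG, diagMapping, Finset.sum_image fun a _ b _ h => (Prod.ext_iff.1 h).1]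
  simp

end MappingEdits

section ScriptToMapping
variable {α : Type}

theorem isTreeMapping_diagMapping (F : Forest α) : IsTreeMapping F F (diagMapping (fsize F)) := by
  refine ⟨?_, ?_⟩ <;> simp only [diagMapping, Finset.forall_mem_image, Finset.mem_Icc]
  · exact fun i hi => ⟨hi.1, hi.2, hi.1, hi.2⟩
  · simp

theorem mapCost_diagMapping_self {c : Cost α} (hse : SelfEq c) (F : Forest α) :
    mapCost c F F (diagMapping (fsize F)) = 0 := by
  rw [mapCost_diagMapping c rfl]
  exact Finset.sum_eq_zero fun i _ => hse _

theorem exists_isTreeMapping_le_editCost {c : Cost α} (hnn : Nonneg c) (htr : Triangle c)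
    (e : Edit α) {F H : Forest α} {M : Finset (ℕ × ℕ)} (hM : IsTreeMapping (e.apply F) H M) :
    ∃ M', IsTreeMapping F H M' ∧ mapCost c F H M' ≤ editCost c e F + mapCost c (e.apply F) H M := by
  by_cases hne : e.apply F = F
  · rw [hne] at hM ⊢
    exact ⟨M, hM, by rw [editCost_of_apply_eq hne, zero_add]⟩
  cases e with
  | del i =>
    simp only [Edit.apply] at hM hne ⊢
    have hi : 1 ≤ i ∧ i ≤ fsize F := by
      by_contra hi; exact hne (applyDel_eq_self (by omega))
    rw [editCost_del_of_ne hne]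
    exact ⟨_, (isTreeMapping_image_succAbove_iff hi.1 hi.2).2 hM,
      (mapCost_image_succAbove c hi.1 hi.2 hM).le⟩
  | rep i y =>
    simp only [Edit.apply] at hM hne ⊢
    have hi : 1 ≤ i ∧ i ≤ fsize F := by
      by_contra hi; exact hne (applyRep_eq_self (by omega))
    rw [editCost_rep_of_ne hne]
    exact ⟨M, hM.of_applyRep, mapCost_le_applyRep htr hi.1 hi.2 hM⟩
  | ins i y l r =>
    simp only [Edit.apply] at hM hne ⊢
    -- the inserted node `p` becomes unmatched, and `F` is the insertion with `p` deleted
    obtain ⟨p, hp1, hp2, hdel, hlab⟩ := exists_applyDel_applyIns_eq hne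
    obtain ⟨M', hM', hcost⟩ := (hM.mono (M.filter_subset (·.1 ≠ p))).exists_applyDel_left c
      hp1 hp2 fun q hq => (Finset.mem_filter.1 hq).2
    have hfilter := mapCost_filter_le hnn htr hM p
    rw [editCost_ins_of_ne hne]
    rw [hdel] at hM' hcost
    rw [hlab] at hcost hfilter
    exact ⟨M', hM', by linarith⟩

theorem exists_isTreeMapping_le_scriptCost {c : Cost α} (hnn : Nonneg c) (hse : SelfEq c)
    (htr : Triangle c) (δ : List (Edit α)) (F : Forest α) :
    ∃ M, IsTreeMapping F (applyScript δ F) M ∧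
      mapCost c F (applyScript δ F) M ≤ scriptCost c δ F := by
  induction δ generalizing F with
  | nil =>
    exact ⟨_, isTreeMapping_diagMapping F, by
      rw [applyScript, List.foldl_nil, mapCost_diagMapping_self hse, scriptCost]⟩
  | cons e es ih =>
    rw [show applyScript (e :: es) F = applyScript es (e.apply F) from rfl, scriptCost]
    obtain ⟨M, hM, hcost⟩ := ih (e.apply F)
    obtain ⟨M', hM', hcost'⟩ := exists_isTreeMapping_le_editCost hnn htr e hM
    exact ⟨M', hM', by linarith⟩

end ScriptToMapping

section MappingToScript
variable {α : Type}

theorem card_filter_le_eq {M : Finset (ℕ × ℕ)} {f : ℕ × ℕ → ℕ} (hf : Set.InjOn f M) {n : ℕ}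
    (hbd : ∀ p ∈ M, 1 ≤ f p ∧ f p ≤ n) (hsurj : ∀ i ∈ Finset.Icc 1 n, ∃ p ∈ M, f p = i)
    {k : ℕ} (hk : k ≤ n) : (M.filter (f · ≤ k)).card = k := by
  have himg : (M.filter (f · ≤ k)).image f = Finset.Icc 1 k := by
    ext i
    simp only [Finset.mem_image, Finset.mem_filter, Finset.mem_Icc]
    constructor
    · rintro ⟨p, ⟨hp, hpk⟩, rfl⟩; exact ⟨(hbd p hp).1, hpk⟩
    · rintro ⟨hi1, hik⟩
      obtain ⟨p, hp, rfl⟩ := hsurj i (Finset.mem_Icc.2 ⟨hi1, by omega⟩)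
      exact ⟨p, ⟨hp, hik⟩, rfl⟩
  rw [← Finset.card_image_of_injOn (hf.mono (Finset.filter_subset _ M)), himg, Nat.card_Icc,
    Nat.add_sub_cancel]

/-- Matched nodes have the same number of matched predecessors on both sides. -/
theorem IsTreeMapping.eq_diagMapping {F G : Forest α} {M : Finset (ℕ × ℕ)}
    (hM : IsTreeMapping F G M) (hF : ∀ i ∈ Finset.Icc 1 (fsize F), ∃ p ∈ M, p.1 = i)
    (hG : ∀ j ∈ Finset.Icc 1 (fsize G), ∃ p ∈ M, p.2 = j) :
    fsize F = fsize G ∧ M = diagMapping (fsize F) := by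
  have hdiag : ∀ p ∈ M, p.1 = p.2 := fun p hp => by
    have hbd := hM.1 p hp
    rw [← card_filter_le_eq hM.injOn_fst (fun q hq => ⟨(hM.1 q hq).1, (hM.1 q hq).2.1⟩) hF hbd.2.1,
      ← card_filter_le_eq hM.injOn_snd (fun q hq => ⟨(hM.1 q hq).2.2.1, (hM.1 q hq).2.2.2⟩) hG
        hbd.2.2.2]
    congr 1
    exact Finset.filter_congr fun q hq => (hM.2 q hq p hp).2.1
  have hn : fsize F = fsize G := by
    apply le_antisymm
    · rcases Nat.eq_zero_or_pos (fsize F) with h | h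
      · omega
      obtain ⟨p, hp, hp1⟩ := hF _ (Finset.mem_Icc.2 ⟨h, le_rfl⟩)
      have := (hM.1 p hp).2.2.2
      have := hdiag p hp
      omega
    · rcases Nat.eq_zero_or_pos (fsize G) with h | h
      · omega
      obtain ⟨p, hp, hp2⟩ := hG _ (Finset.mem_Icc.2 ⟨h, le_rfl⟩)
      have := (hM.1 p hp).2.1
      have := hdiag p hp
      omega
  refine ⟨hn, Finset.ext fun q => ⟨fun hq => ?_, fun hq => ?_⟩⟩
  · exact Finset.mem_image.2 ⟨q.1, Finset.mem_Icc.2 ⟨(hM.1 q hq).1, (hM.1 q hq).2.1⟩,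
      Prod.ext rfl (hdiag q hq)⟩
  · obtain ⟨i, hi, rfl⟩ := Finset.mem_image.1 hq
    obtain ⟨p, hp, rfl⟩ := hF i hi
    rwa [← Prod.mk.eta (p := p), ← hdiag p hp] at hp

/-- Subtree sizes are determined by the ancestor relation. -/
theorem sizeAt_eq_of_isTreeMapping_diagMapping {F G : Forest α} (hn : fsize F = fsize G)
    (hM : IsTreeMapping F G (diagMapping (fsize F))) {j : ℕ} (hj : 1 ≤ j) :
    sizeAt F j = sizeAt G j := by
  rcases le_or_gt j (fsize F) with hjF | hjF
  · have hmem : ∀ k, 1 ≤ k → k ≤ fsize F → (k, k) ∈ diagMapping (fsize F) := fun k h1 h2 =>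
      Finset.mem_image.2 ⟨k, Finset.mem_Icc.2 ⟨h1, h2⟩, rfl⟩
    have hanc : ∀ k, 1 ≤ k → k ≤ fsize F → (AncestorIdx F j k ↔ AncestorIdx G j k) :=
      fun k h1 h2 => (hM.2 _ (hmem j hj hjF) _ (hmem k h1 h2)).2.2
    have := one_le_sizeAt hj hjF
    have := one_le_sizeAt hj (hn ▸ hjF)
    have := add_sizeAt_le hj hjF
    have := add_sizeAt_le hj (hn ▸ hjF)
    by_contra hne
    rcases Nat.lt_or_gt_of_ne hne with hlt | hlt
    · have := (hanc (j + sizeAt F j) (by omega) (by omega)).2 ⟨by omega, by omega⟩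
      exact absurd this.2 (lt_irrefl _)
    · have := (hanc (j + sizeAt G j) (by omega) (by omega)).1 ⟨by omega, by omega⟩
      exact absurd this.2 (lt_irrefl _)
  · simp [sizeAt_eq, (profileAt_eq_none_iff hj).2 hjF, (profileAt_eq_none_iff hj).2 (hn ▸ hjF)]

theorem exists_script_le_sum_of_labelAt_eq {c : Cost α} (hnn : Nonneg c) {G : Forest α}
    {S : Finset ℕ} (hS : S ⊆ Finset.Icc 1 (fsize G)) {F : Forest α} (hn : fsize F = fsize G)
    (hsz : ∀ j, 1 ≤ j → sizeAt F j = sizeAt G j)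
    (hlab : ∀ j, 1 ≤ j → j ∉ S → labelAt F j = labelAt G j) :
    ∃ δ, applyScript δ F = G ∧ scriptCost c δ F ≤ ∑ j ∈ S, c (labelAt F j) (labelAt G j) := by
  induction S using Finset.induction_on generalizing F with
  | empty =>
    exact ⟨[], eq_of_labelAt_eq_of_sizeAt_eq (fun j hj => hlab j hj (Finset.notMem_empty j)) hsz,
      by simp [scriptCost]⟩
  | insert a S haS ih =>
    obtain ⟨ha1, ha2⟩ := Finset.mem_Icc.1 (hS (Finset.mem_insert_self a S))
    obtain ⟨y, hy⟩ : ∃ y, labelAt G a = some y := Option.ne_none_iff_exists'.1 fun h => by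
      rw [labelAt_eq_none_iff ha1] at h; omega
    have hrep : ∀ j, 1 ≤ j → j ≠ a → labelAt (applyRep y a F) j = labelAt F j :=
      fun j hj hja => labelAt_applyRep_of_ne y F hj hja
    obtain ⟨δ, happ, hcost⟩ := ih ((Finset.subset_insert a S).trans hS) (F := applyRep y a F)
      (by rw [fsize_applyRep, hn]) (fun j hj => by rw [sizeAt_applyRep y a F hj, hsz j hj])
      fun j hj hjS => by
        by_cases hja : j = a
        · rw [hja, labelAt_applyRep y ha1 (by omega), hy]
        · rw [hrep j hj hja, hlab j hj (by simp [hja, hjS])]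
    refine ⟨.rep a y :: δ, happ, ?_⟩
    have hsum : ∑ j ∈ S, c (labelAt (applyRep y a F) j) (labelAt G j) =
        ∑ j ∈ S, c (labelAt F j) (labelAt G j) := Finset.sum_congr rfl fun j hj => by
      rw [hrep j (Finset.mem_Icc.1 (hS (Finset.mem_insert_of_mem hj))).1 (by rintro rfl; exact haS hj)]
    rw [scriptCost, Finset.sum_insert haS, hy]
    simp only [Edit.apply]
    linarith [editCost_rep_le hnn a y F]

theorem exists_script_of_sizeAt_eq {c : Cost α} (hnn : Nonneg c) {F G : Forest α}
    (hn : fsize F = fsize G) (hsz : ∀ j, 1 ≤ j → sizeAt F j = sizeAt G j) :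
    ∃ δ, applyScript δ F = G ∧
      scriptCost c δ F ≤ ∑ j ∈ Finset.Icc 1 (fsize F), c (labelAt F j) (labelAt G j) := by
  rw [hn]
  refine exists_script_le_sum_of_labelAt_eq hnn subset_rfl hn hsz fun j hj hjS => ?_
  have hj' : fsize G < j := by simpa [hj] using hjS
  rw [(labelAt_eq_none_iff hj).2 hj', (labelAt_eq_none_iff hj).2 (by omega)]

theorem exists_script_le_mapCost {c : Cost α} (hnn : Nonneg c) {F G : Forest α}
    {M : Finset (ℕ × ℕ)} (hM : IsTreeMapping F G M) :
    ∃ δ, applyScript δ F = G ∧ scriptCost c δ F ≤ mapCost c F G M := by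
  induction hN : fsize F + fsize G using Nat.strong_induction_on generalizing F G M with
  | _ N ih =>
  by_cases hdel : ∃ i ∈ Finset.Icc 1 (fsize F), ∀ p ∈ M, p.1 ≠ i
  · obtain ⟨i, hi, hni⟩ := hdel
    obtain ⟨hi1, hi2⟩ := Finset.mem_Icc.1 hi
    obtain ⟨M', hM', hcost⟩ := hM.exists_applyDel_left c hi1 hi2 hni
    have := fsize_applyDel hi1 hi2
    obtain ⟨δ, happ, hδ⟩ := ih _ (by omega) hM' rfl
    exact ⟨.del i :: δ, happ, by rw [scriptCost_del_cons c hi1 hi2, hcost]; linarith⟩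
  by_cases hins : ∃ j ∈ Finset.Icc 1 (fsize G), ∀ p ∈ M, p.2 ≠ j
  · obtain ⟨j, hj, hnj⟩ := hins
    obtain ⟨hj1, hj2⟩ := Finset.mem_Icc.1 hj
    obtain ⟨M', hM', hcost⟩ := hM.exists_applyDel_right c hj1 hj2 hnj
    have := fsize_applyDel hj1 hj2
    obtain ⟨δ, happ, hδ⟩ := ih _ (by omega) hM' rfl
    obtain ⟨δ', happ', hcost'⟩ := exists_script_append_ins c hj1 hj2 happ
    exact ⟨δ', happ', by rw [hcost', hcost]; linarith⟩
  push Not at hdel hins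
  obtain ⟨hn, rfl⟩ := hM.eq_diagMapping hdel hins
  obtain ⟨δ, happ, hδ⟩ := exists_script_of_sizeAt_eq hnn hn
    fun j hj => sizeAt_eq_of_isTreeMapping_diagMapping hn hM hj
  exact ⟨δ, happ, by rwa [mapCost_diagMapping c hn]⟩

end MappingToScript

/-- If the cost function `c` is non-negative, self-equal and conforms
to the triangular inequality, then the minimum cost of an edit script transforming `X`
into `Y` equals the minimum cost of a tree mapping between `X` and `Y`. -/
theorem script_min_eq_mapping_min {α : Type} (c : Cost α) (hnn : Nonneg c)
    (hse : SelfEq c) (htr : Triangle c) (F G : Forest α) :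
    sInf { r : ℝ | ∃ δ : List (Edit α), applyScript δ F = G ∧ scriptCost c δ F = r } =
      sInf { r : ℝ | ∃ M : Finset (ℕ × ℕ), IsTreeMapping F G M ∧ mapCost c F G M = r } := by
  apply csInf_eq_csInf_of_forall_exists_le
  · rintro _ ⟨δ, rfl, rfl⟩
    obtain ⟨M, hM, hcost⟩ := exists_isTreeMapping_le_scriptCost hnn hse htr δ F
    exact ⟨_, ⟨M, hM, rfl⟩, hcost⟩
  · rintro _ ⟨M, hM, rfl⟩
    obtain ⟨δ, happ, hcost⟩ := exists_script_le_mapCost hnn hM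
    exact ⟨_, ⟨δ, happ, rfl⟩, hcost⟩

end TED
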